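/- arXiv:1108.4606 — 3 statements merged into one kernel-verified Lean document; each statement's English description precedes it below -/
import Mathlib

section
/- Let G be a general-ladder with layers L_0, L_1, …, L_M, let i∈{0,1,2}, let R_i = ∪_{j≥0} L_{3j+i}, let G_i be the corresponding subinstance, and let H_i be the reduced graph of G_i. Then every vertex v ∈ V_i ∖ R_i is incident to at most one edge of G_i that is removed in forming H_i. -/
open Finset

variable {V : Type*} [Fintype V] [DecidableEq V]

/-- The closed neighborhood `N[v]` of a vertex. -/
def closedNbhd (G : SimpleGraph V) [DecidableRel G.Adj] (v : V) : Finset V :=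
  insert v (G.neighborFinset v)

/-- A demand assignment: nonnegative, supported on closed neighborhoods. -/
def IsAssignment (G : SimpleGraph V) [DecidableRel G.Adj] (f : V → V → ℝ) : Prop :=
  (∀ u v, 0 ≤ f u v) ∧ ∀ u v, v ∉ closedNbhd G u → f u v = 0

/-- Feasibility: the demand of every vertex is fully assigned. -/
def Feasible (G : SimpleGraph V) [DecidableRel G.Adj] (d : V → ℝ) (f : V → V → ℝ) : Prop :=
  IsAssignment G f ∧ ∀ u, d u ≤ ∑ v ∈ closedNbhd G u, f u v

/-- Multiplicity `x_f(v) = ⌈(Σ_{u∈N[v]} f(u,v))/c(v)⌉`. -/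
noncomputable def mult (G : SimpleGraph V) [DecidableRel G.Adj] (c : V → ℝ)
    (f : V → V → ℝ) (v : V) : ℤ :=
  ⌈(∑ u ∈ closedNbhd G v, f u v) / c v⌉

/-- Cost of a demand assignment. -/
noncomputable def cost (G : SimpleGraph V) [DecidableRel G.Adj] (w c : V → ℝ)
    (f : V → V → ℝ) : ℝ :=
  ∑ v, w v * (mult G c f v : ℝ)

/-- Optimal cost of a feasible demand assignment. -/
noncomputable def OPT (G : SimpleGraph V) [DecidableRel G.Adj] (w c d : V → ℝ) : ℝ :=
  sInf {r | ∃ f, Feasible G d f ∧ cost G w c f = r}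

/-- Feasibility for the LP relaxation of capacitated domination. -/
def LPFeasible (G : SimpleGraph V) [DecidableRel G.Adj] (c d : V → ℝ)
    (x : V → ℝ) (f : V → V → ℝ) : Prop :=
  (∀ u, 0 ≤ x u) ∧ IsAssignment G f ∧
  (∀ u, d u ≤ ∑ v ∈ closedNbhd G u, f u v) ∧
  (∀ u, ∑ v ∈ closedNbhd G u, f v u ≤ c u * x u) ∧
  (∀ u, ∀ v ∈ closedNbhd G u, f v u ≤ d v * x u)

/-- Optimal value `OPT_f(G)` of the LP relaxation. -/
noncomputable def OPTf (G : SimpleGraph V) [DecidableRel G.Adj] (w c d : V → ℝ) : ℝ :=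
  sInf {r | ∃ x f, LPFeasible G c d x f ∧ ∑ u, w u * x u = r}

/-- The subinstance graph on the same vertex set: keep exactly the edges of `G`
incident to a vertex of `R` (vertices outside `V_i = ∪_{v∈R} N[v]` become
isolated). -/
def subGraph (G : SimpleGraph V) (R : Finset V) : SimpleGraph V where
  Adj a b := G.Adj a b ∧ (a ∈ R ∨ b ∈ R)
  symm := ⟨fun a b h => ⟨h.1.symm, h.2.symm⟩⟩
  loopless := ⟨fun a h => G.loopless.irrefl a h.1⟩

instance (G : SimpleGraph V) [DecidableRel G.Adj] (R : Finset V) :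
    DecidableRel (subGraph G R).Adj :=
  fun a b => inferInstanceAs (Decidable (G.Adj a b ∧ (a ∈ R ∨ b ∈ R)))

/-- The demands of the subinstance: `d` on `R`, zero elsewhere. -/
def subDemand (d : V → ℝ) (R : Finset V) : V → ℝ :=
  fun v => if v ∈ R then d v else 0

/-- `G` together with the layer map `L` is a general-ladder (with respect to the
total order on `V`): layer `0` is a single vertex (the anchor); edges inside a
layer join consecutive vertices of the layer; all edges join vertices of the
same or adjacent layers; and neighborhoods into the next layer respect the
order. -/
structure IsGeneralLadder [LinearOrder V] (G : SimpleGraph V) (L : V → ℕ) : Prop where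
  anchor : ∃ a, ∀ v, L v = 0 ↔ v = a
  intra_consecutive : ∀ u v, G.Adj u v → L u = L v → u < v →
      ∀ z, L z = L u → u < z → z < v → False
  adj_layers : ∀ u v, G.Adj u v → L u ≤ L v + 1 ∧ L v ≤ L u + 1
  mono : ∀ u v, L u = L v → u < v → ∀ p q, G.Adj u p → G.Adj v q →
      L p = L u + 1 → L q = L v + 1 → p ≤ q

/-- Vertices lying in the layers `L_{3j+i}`, `j ≥ 0`. -/
def layerClass (L : V → ℕ) (i : ℕ) : Finset V :=
  Finset.univ.filter (fun v => L v % 3 = i)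

/-- The set of maximum elements of a finite set (empty or a singleton). -/
def maxSet [LinearOrder V] (s : Finset V) : Finset V :=
  s.filter (fun p => ∀ q ∈ s, q ≤ p)

/-- The data of the reduction: for every `v ∈ R`, a listing of `N[v]` in
nondecreasing order of cost (any tie-breaking), together with the index `jIdx v`
of the first entry of capacity exceeding `d v` (`= length` if there is none) and
an index `kIdx v` before it minimizing the cost/capacity ratio among the entries
before `jIdx v` (set to `0` when `jIdx v = 0`, i.e. when `k_v` is undefined). -/
structure ReductionData [LinearOrder V] (G : SimpleGraph V) [DecidableRel G.Adj]
    (w c d : V → ℝ) (R : Finset V) where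
  l : V → List V
  nodup : ∀ v ∈ R, (l v).Nodup
  mem_iff : ∀ v ∈ R, ∀ x, x ∈ l v ↔ x ∈ closedNbhd G v
  sorted : ∀ v ∈ R, (l v).Pairwise (fun a b => w a ≤ w b)
  jIdx : V → ℕ
  jIdx_le : ∀ v ∈ R, jIdx v ≤ (l v).length
  c_le_before_j : ∀ v ∈ R, ∀ m, (hm : m < (l v).length) → m < jIdx v →
      c ((l v).get ⟨m, hm⟩) ≤ d v
  c_gt_at_j : ∀ v ∈ R, ∀ (hj : jIdx v < (l v).length),
      d v < c ((l v).get ⟨jIdx v, hj⟩)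
  kIdx : V → ℕ
  kIdx_lt_j : ∀ v ∈ R, 0 < jIdx v → kIdx v < jIdx v
  kIdx_eq_zero : ∀ v ∈ R, jIdx v = 0 → kIdx v = 0
  k_ratio_min : ∀ v ∈ R, ∀ m, (hm : m < (l v).length) → m < jIdx v →
      ∀ (hk : kIdx v < (l v).length),
      w ((l v).get ⟨kIdx v, hk⟩) / c ((l v).get ⟨kIdx v, hk⟩) ≤
        w ((l v).get ⟨m, hm⟩) / c ((l v).get ⟨m, hm⟩)

/-- For `v ∈ R` in layer `ℓ`, the neighbors that are kept:
`(N[v] ∩ L_ℓ) ∪ {j_v, k_v, p_v, q_v}` where `p_v` (resp. `q_v`) is the largest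
neighbor of `v` in layer `ℓ-1` (resp. `ℓ+1`). -/
def keepSet [LinearOrder V] (G : SimpleGraph V) [DecidableRel G.Adj]
    {w c d : V → ℝ} {R : Finset V} (L : V → ℕ)
    (data : ReductionData G w c d R) (v : V) : Finset V :=
  ((closedNbhd G v).filter (fun x => L x = L v)) ∪
  {(data.l v).getD (data.jIdx v) v, (data.l v).getD (data.kIdx v) v} ∪
  maxSet ((closedNbhd G v).filter (fun x => L x + 1 = L v)) ∪
  maxSet ((closedNbhd G v).filter (fun x => L x = L v + 1))

/-- The reduced graph: delete every edge from a vertex `v ∈ R` to a neighbor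
outside `L_ℓ ∪ {j_v, k_v, p_v, q_v}`. -/
def reducedGraph [LinearOrder V] (G : SimpleGraph V) [DecidableRel G.Adj]
    {w c d : V → ℝ} {R : Finset V} (L : V → ℕ)
    (data : ReductionData G w c d R) : SimpleGraph V where
  Adj a b := G.Adj a b ∧ (a ∈ R → b ∈ keepSet G L data a) ∧
      (b ∈ R → a ∈ keepSet G L data b)
  symm := ⟨fun a b h => ⟨h.1.symm, h.2.2, h.2.1⟩⟩
  loopless := ⟨fun a h => G.loopless.irrefl a h.1⟩

instance [LinearOrder V] (G : SimpleGraph V) [DecidableRel G.Adj]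
    {w c d : V → ℝ} {R : Finset V} (L : V → ℕ) (data : ReductionData G w c d R) :
    DecidableRel (reducedGraph G L data).Adj :=
  fun a b => inferInstanceAs (Decidable (G.Adj a b ∧ (a ∈ R → b ∈ keepSet G L data a) ∧
      (b ∈ R → a ∈ keepSet G L data b)))

/-! A vertex `v ∉ R_i` loses only edges `vu` with `u ∈ R_i`, and only when `v` is not the
largest neighbor of `u` in the layer of `v`. Since the layers of `R_i` are three apart, all such
`u` lie in one layer adjacent to that of `v`. Given two of them, `u₁ < u₂`, the monotonicity of a
general-ladder forbids a neighbor `q > v` of `u₁` in the layer of `v`: if the `uₖ` lie above `v`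
it forces `u₂ ≤ u₁`, if below, `q ≤ v`. So `v` is the largest neighbor of `u₁` in its layer, and
the edge `vu₁` is kept. -/

theorem mem_closedNbhd_of_adj {G : SimpleGraph V} [DecidableRel G.Adj] {u v : V}
    (h : G.Adj u v) : v ∈ closedNbhd G u :=
  mem_insert_of_mem ((G.mem_neighborFinset u v).2 h)

theorem adj_of_mem_closedNbhd {G : SimpleGraph V} [DecidableRel G.Adj] {u q : V}
    (hq : q ∈ closedNbhd G u) (hne : q ≠ u) : G.Adj u q :=
  (G.mem_neighborFinset u q).1 ((mem_insert.1 hq).resolve_left hne)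

section

variable [LinearOrder V]

theorem exists_gt_of_mem_of_notMem_maxSet {s : Finset V} {v : V} (hv : v ∈ s)
    (hmax : v ∉ maxSet s) : ∃ q ∈ s, v < q := by
  by_contra! h
  exact hmax (mem_filter.2 ⟨hv, h⟩)

variable {G : SimpleGraph V} [DecidableRel G.Adj] {L : V → ℕ} {w c d : V → ℝ} {R : Finset V}
  {u v : V}

theorem exists_lower_neighbor_gt_of_notMem_keepSet {data : ReductionData G w c d R}
    (hadj : G.Adj u v) (hv : v ∉ keepSet G L data u) (hL : L v + 1 = L u) :
    ∃ q, G.Adj u q ∧ L q + 1 = L u ∧ v < q := by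
  obtain ⟨q, hq, hvq⟩ := exists_gt_of_mem_of_notMem_maxSet
    (mem_filter.2 ⟨mem_closedNbhd_of_adj hadj, hL⟩)
    fun h => hv (mem_union_left _ (mem_union_right _ h))
  obtain ⟨hqN, hqL⟩ := mem_filter.1 hq
  exact ⟨q, adj_of_mem_closedNbhd hqN (by rintro rfl; omega), hqL, hvq⟩

theorem exists_upper_neighbor_gt_of_notMem_keepSet {data : ReductionData G w c d R}
    (hadj : G.Adj u v) (hv : v ∉ keepSet G L data u) (hL : L v = L u + 1) :
    ∃ q, G.Adj u q ∧ L q = L u + 1 ∧ v < q := by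
  obtain ⟨q, hq, hvq⟩ := exists_gt_of_mem_of_notMem_maxSet
    (mem_filter.2 ⟨mem_closedNbhd_of_adj hadj, hL⟩)
    fun h => hv (mem_union_right _ h)
  obtain ⟨hqN, hqL⟩ := mem_filter.1 hq
  exact ⟨q, adj_of_mem_closedNbhd hqN (by rintro rfl; omega), hqL, hvq⟩

theorem adj_and_notMem_keepSet_of_lost_edge {data : ReductionData (subGraph G R) w c d R}
    (hvR : v ∉ R) (hu : u ∈ (subGraph G R).neighborFinset v \
      (reducedGraph (subGraph G R) L data).neighborFinset v) :
    (subGraph G R).Adj u v ∧ u ∈ R ∧ v ∉ keepSet (subGraph G R) L data u := by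
  simp only [mem_sdiff, SimpleGraph.mem_neighborFinset] at hu
  obtain ⟨hadj, hlost⟩ := hu
  exact ⟨hadj.symm, hadj.2.resolve_left hvR,
    fun hkeep => hlost ⟨hadj, fun h => absurd h hvR, fun _ => hkeep⟩⟩

theorem not_lt_of_lost_edges (hGL : IsGeneralLadder G L) {i : ℕ} {u₁ u₂ : V}
    {data : ReductionData (subGraph G (layerClass L i)) w c d (layerClass L i)}
    (hvR : v ∉ layerClass L i)
    (hu₁ : u₁ ∈ (subGraph G (layerClass L i)).neighborFinset v \
      (reducedGraph (subGraph G (layerClass L i)) L data).neighborFinset v)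
    (hu₂ : u₂ ∈ (subGraph G (layerClass L i)).neighborFinset v \
      (reducedGraph (subGraph G (layerClass L i)) L data).neighborFinset v) :
    ¬ u₁ < u₂ := by
  intro hlt
  obtain ⟨hadj₁, hu₁R, hkeep₁⟩ := adj_and_notMem_keepSet_of_lost_edge hvR hu₁
  obtain ⟨hadj₂, hu₂R, -⟩ := adj_and_notMem_keepSet_of_lost_edge hvR hu₂
  simp only [layerClass, mem_filter, mem_univ, true_and] at hvR hu₁R hu₂R
  have hlay₁ := hGL.adj_layers v u₁ hadj₁.1.symm
  have hlay₂ := hGL.adj_layers v u₂ hadj₂.1.symm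
  have hlayers : (L u₁ = L v + 1 ∧ L u₂ = L v + 1) ∨ (L v = L u₁ + 1 ∧ L v = L u₂ + 1) := by
    omega
  rcases hlayers with ⟨hL₁, hL₂⟩ | ⟨hL₁, hL₂⟩
  · obtain ⟨q, hq, hqL, hvq⟩ := exists_lower_neighbor_gt_of_notMem_keepSet hadj₁ hkeep₁ hL₁.symm
    exact absurd (hGL.mono v q (by omega) hvq u₂ u₁ hadj₂.1.symm hq.1.symm hL₂ (by omega))
      (not_le.2 hlt)
  · obtain ⟨q, hq, hqL, hvq⟩ := exists_upper_neighbor_gt_of_notMem_keepSet hadj₁ hkeep₁ hL₁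
    exact absurd (hGL.mono u₁ u₂ (by omega) hlt q v hq.1 hadj₂.1 hqL hL₂) (not_le.2 hvq)

end

theorem reduction_loses_at_most_one_edge_general [LinearOrder V]
    (G : SimpleGraph V) [DecidableRel G.Adj] (L : V → ℕ)
    (hGL : IsGeneralLadder G L)
    (w c d : V → ℝ)
    (i : ℕ)
    (data : ReductionData (subGraph G (layerClass L i)) w c d (layerClass L i)) :
    ∀ v ∈ (layerClass L i).biUnion (fun x => closedNbhd G x), v ∉ layerClass L i →
      (((subGraph G (layerClass L i)).neighborFinset v) \
        ((reducedGraph (subGraph G (layerClass L i)) L data).neighborFinset v)).card ≤ 1 := by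
  intro v _ hvR
  exact card_le_one.2 fun u₁ hu₁ u₂ hu₂ =>
    le_antisymm (not_lt.1 (not_lt_of_lost_edges hGL hvR hu₂ hu₁))
      (not_lt.1 (not_lt_of_lost_edges hGL hvR hu₁ hu₂))

/-- in the reduction from `G_i` to `H_i`, every vertex of
`V_i ∖ R_i` loses at most one incident edge. -/
theorem reduction_loses_at_most_one_edge [LinearOrder V]
    (G : SimpleGraph V) [DecidableRel G.Adj] (L : V → ℕ)
    (hGL : IsGeneralLadder G L)
    (w c d : V → ℝ) (hw : ∀ v, 0 ≤ w v) (hc : ∀ v, 0 < c v) (hd : ∀ v, 0 ≤ d v)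
    (i : ℕ) (hi : i < 3)
    (data : ReductionData (subGraph G (layerClass L i)) w c d (layerClass L i)) :
    ∀ v ∈ (layerClass L i).biUnion (fun x => closedNbhd G x), v ∉ layerClass L i →
      (((subGraph G (layerClass L i)).neighborFinset v) \
        ((reducedGraph (subGraph G (layerClass L i)) L data).neighborFinset v)).card ≤ 1 :=
  reduction_loses_at_most_one_edge_general G L hGL w c d i data
end

section
/- Let G be a general-ladder with layers L_0, L_1, …, L_M, let i∈{0,1,2}, let R_i = ∪_{j≥0} L_{3j+i}, let G_i be the corresponding subinstance, and let H_i be the reduced graph of G_i. Then every vertex v ∈ R_i has degree at most 6 in H_i (hence its closed neighborhood in H_i has size at most 7). -/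
open Finset

variable {V : Type*} [Fintype V] [DecidableEq V]

/-! Every neighbor of `v ∈ R` in the reduced graph lies in the kept set of `v`, which contains `v`
and has at most seven elements: its part in the layer of `v` is `v` together with at most one
neighbor on each side of `v` (an intra-layer edge joins consecutive vertices), and besides that it
only adds `j_v`, `k_v` and the maxima `p_v`, `q_v`. -/

theorem card_closedNbhd_eq_degree_add_one (G : SimpleGraph V) [DecidableRel G.Adj] (v : V) :
    (closedNbhd G v).card = G.degree v + 1 := by
  rw [closedNbhd, Finset.card_insert_of_notMem (by simp), G.card_neighborFinset_eq_degree]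

omit [Fintype V] [DecidableEq V] in
theorem subGraph_le (G : SimpleGraph V) (R : Finset V) : subGraph G R ≤ G :=
  fun _ _ h => h.1

section

variable [LinearOrder V]

theorem card_maxSet_le_one (s : Finset V) : (maxSet s).card ≤ 1 :=
  Finset.card_le_one.mpr fun a ha b hb => by
    simp only [maxSet, Finset.mem_filter] at ha hb
    exact le_antisymm (hb.2 a ha.1) (ha.2 b hb.1)

theorem IsGeneralLadder.card_sameLayer_closedNbhd_le {G H : SimpleGraph V} [DecidableRel H.Adj]
    {L : V → ℕ} (hGL : IsGeneralLadder G L) (hHG : H ≤ G) (v : V) :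
    ((closedNbhd H v).filter (fun x => L x = L v)).card ≤ 3 := by
  set A := (closedNbhd H v).filter (fun x => L x = L v)
  have adj_of_mem : ∀ x ∈ A, x ≠ v → G.Adj v x ∧ L x = L v := by
    intro x hx hxv
    simp only [A, closedNbhd, Finset.mem_filter, Finset.mem_insert,
      SimpleGraph.mem_neighborFinset] at hx
    exact ⟨hHG (hx.1.resolve_left hxv), hx.2⟩
  have below : (A.filter (· < v)).card ≤ 1 := by
    refine Finset.card_le_one.mpr fun a ha b hb => ?_
    simp only [Finset.mem_filter] at ha hb
    obtain ⟨hav, hLa⟩ := adj_of_mem a ha.1 ha.2.ne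
    obtain ⟨hbv, hLb⟩ := adj_of_mem b hb.1 hb.2.ne
    by_contra hab
    rcases lt_or_gt_of_ne hab with h | h
    · exact hGL.intra_consecutive a v hav.symm hLa ha.2 b (hLb.trans hLa.symm) h hb.2
    · exact hGL.intra_consecutive b v hbv.symm hLb hb.2 a (hLa.trans hLb.symm) h ha.2
  have above : (A.filter (v < ·)).card ≤ 1 := by
    refine Finset.card_le_one.mpr fun a ha b hb => ?_
    simp only [Finset.mem_filter] at ha hb
    obtain ⟨hav, hLa⟩ := adj_of_mem a ha.1 ha.2.ne'
    obtain ⟨hbv, hLb⟩ := adj_of_mem b hb.1 hb.2.ne'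
    by_contra hab
    rcases lt_or_gt_of_ne hab with h | h
    · exact hGL.intra_consecutive v b hbv hLb.symm hb.2 a hLa ha.2 h
    · exact hGL.intra_consecutive v a hav hLa.symm ha.2 b hLb hb.2 h
  have hsplit : A ⊆ insert v (A.filter (· < v) ∪ A.filter (v < ·)) := by
    intro x hx
    rcases lt_trichotomy x v with h | rfl | h
    · simp [hx, h]
    · exact Finset.mem_insert_self _ _
    · simp [hx, h]
  calc A.card ≤ (A.filter (· < v) ∪ A.filter (v < ·)).card + 1 :=
        (Finset.card_le_card hsplit).trans (Finset.card_insert_le _ _)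
    _ ≤ (A.filter (· < v)).card + (A.filter (v < ·)).card + 1 := by
        gcongr; exact Finset.card_union_le _ _
    _ ≤ 3 := by omega

variable (G : SimpleGraph V) [DecidableRel G.Adj] {w c d : V → ℝ} {R : Finset V} (L : V → ℕ)
  (data : ReductionData G w c d R)

theorem card_keepSet_le (v : V) :
    (keepSet G L data v).card ≤ ((closedNbhd G v).filter (fun x => L x = L v)).card + 4 := by
  have hjk : ({(data.l v).getD (data.jIdx v) v, (data.l v).getD (data.kIdx v) v} :
      Finset V).card ≤ 2 := Finset.card_le_two
  have hp := card_maxSet_le_one ((closedNbhd G v).filter (fun x => L x + 1 = L v))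
  have hq := card_maxSet_le_one ((closedNbhd G v).filter (fun x => L x = L v + 1))
  unfold keepSet
  grw [Finset.card_union_le, Finset.card_union_le, Finset.card_union_le]
  omega

theorem self_mem_keepSet (v : V) : v ∈ keepSet G L data v := by
  simp [keepSet, closedNbhd]

theorem neighborFinset_reducedGraph_subset {v : V} (hv : v ∈ R) :
    (reducedGraph G L data).neighborFinset v ⊆ (keepSet G L data v).erase v := fun x hx => by
  rw [SimpleGraph.mem_neighborFinset] at hx
  exact Finset.mem_erase.mpr ⟨hx.ne.symm, hx.2.1 hv⟩

theorem degree_reducedGraph_add_one_le_card_keepSet {v : V} (hv : v ∈ R) :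
    (reducedGraph G L data).degree v + 1 ≤ (keepSet G L data v).card := by
  rw [← SimpleGraph.card_neighborFinset_eq_degree,
    ← Finset.card_erase_add_one (self_mem_keepSet G L data v)]
  gcongr
  exact neighborFinset_reducedGraph_subset G L data hv

end

theorem reduction_degree_bound_general [LinearOrder V]
    (G : SimpleGraph V) [DecidableRel G.Adj] (L : V → ℕ)
    (hGL : IsGeneralLadder G L)
    (w c d : V → ℝ)
    (i : ℕ)
    (data : ReductionData (subGraph G (layerClass L i)) w c d (layerClass L i)) :
    ∀ v ∈ layerClass L i,
      (reducedGraph (subGraph G (layerClass L i)) L data).degree v ≤ 6 ∧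
      (closedNbhd (reducedGraph (subGraph G (layerClass L i)) L data) v).card ≤ 7 := by
  intro v hv
  have hdeg := degree_reducedGraph_add_one_le_card_keepSet _ L data hv
  have hkeep := card_keepSet_le _ L data v
  have hlayer := hGL.card_sameLayer_closedNbhd_le (subGraph_le G (layerClass L i)) v
  rw [card_closedNbhd_eq_degree_add_one]
  omega

/-- in the reduced graph `H_i`, every vertex of `R_i` has degree at
most `6` (so its closed neighborhood has size at most `7`). -/
theorem reduction_degree_bound [LinearOrder V]
    (G : SimpleGraph V) [DecidableRel G.Adj] (L : V → ℕ)
    (hGL : IsGeneralLadder G L)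
    (w c d : V → ℝ) (hw : ∀ v, 0 ≤ w v) (hc : ∀ v, 0 < c v) (hd : ∀ v, 0 ≤ d v)
    (i : ℕ) (hi : i < 3)
    (data : ReductionData (subGraph G (layerClass L i)) w c d (layerClass L i)) :
    ∀ v ∈ layerClass L i,
      (reducedGraph (subGraph G (layerClass L i)) L data).degree v ≤ 6 ∧
      (closedNbhd (reducedGraph (subGraph G (layerClass L i)) L data) v).card ≤ 7 :=
  reduction_degree_bound_general G L hGL w c d i data
end

section
/- Let G be a general-ladder with layers L_0, L_1, …, L_M, let i∈{0,1,2}, let R_i = ∪_{j≥0} L_{3j+i}, let G_i be the corresponding subinstance, and let H_i be the reduced graph of G_i. Then OPT_f(H_i) ≤ 2·OPT_f(G_i), where OPT_f denotes the optimal value of the LP relaxation of capacitated domination. -/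
open Finset

variable {V : Type*} [Fintype V] [DecidableEq V]

/-!
Take an LP solution `(x, f)` on `G_i`. Since the layers in `R_i` are three apart, an edge of
`G_i` missing from `H_i` joins a client `u ∈ R_i` to a server `v` in a layer adjacent to that of
`u`. The flow `f(u,v)` is sent instead to `k_u` if `v` comes before `j_u` in the cost order of
`N[u]`, and to `j_u` otherwise, raising `x` there by `f(u,v) / min(c, d(u))`. The ratio choice of
`k_u` and the cost order together with `c(j_u) > d(u)` make this raise cost at most
`w(v) x(v)`. As `v` is not the largest neighbor of `u` in its layer, the monotonicity of the
ladder shows that no other client loses `v`, so each `w(v) x(v)` is paid at most once.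
-/

section ClosedNbhd

variable {G : SimpleGraph V} [DecidableRel G.Adj] {u v : V}

lemma mem_closedNbhd_iff : v ∈ closedNbhd G u ↔ v = u ∨ G.Adj u v := by
  simp [closedNbhd]

lemma self_mem_closedNbhd (G : SimpleGraph V) [DecidableRel G.Adj] (u : V) :
    u ∈ closedNbhd G u :=
  mem_insert_self _ _

lemma mem_closedNbhd_comm : v ∈ closedNbhd G u ↔ u ∈ closedNbhd G v := by
  rw [mem_closedNbhd_iff, mem_closedNbhd_iff, G.adj_comm, eq_comm]

end ClosedNbhd

lemma sum_ite_le_of_unique {ι : Type*} [Fintype ι] {a : ℝ} (ha : 0 ≤ a) {p : ι → Prop}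
    [DecidablePred p] (hp : ∀ j k, p j → p k → j = k) : ∑ j, (if p j then a else 0) ≤ a := by
  rw [sum_ite, sum_const_zero, add_zero, sum_const, nsmul_eq_mul]
  refine mul_le_of_le_one_left ha ?_
  exact_mod_cast card_le_one.2 fun j hj k hk => hp j k (mem_filter.1 hj).2 (mem_filter.1 hk).2

section LP

variable {G H : SimpleGraph V} [DecidableRel G.Adj] [DecidableRel H.Adj] {w c d x : V → ℝ}
  {f : V → V → ℝ}

lemma LPFeasible.x_nonneg (h : LPFeasible G c d x f) (u : V) : 0 ≤ x u := h.1 u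

lemma LPFeasible.flow_nonneg (h : LPFeasible G c d x f) (u v : V) : 0 ≤ f u v := h.2.1.1 u v

lemma LPFeasible.flow_le_min_mul (h : LPFeasible G c d x f) {u v : V}
    (hv : v ∈ closedNbhd G u) : f u v ≤ min (d u) (c v) * x v := by
  obtain ⟨hx, ⟨hf, -⟩, -, hcap, hdem⟩ := h
  have hu : u ∈ closedNbhd G v := mem_closedNbhd_comm.1 hv
  rw [min_mul_of_nonneg _ _ (hx v)]
  exact le_min (hdem v u hu) ((single_le_sum (fun s _ => hf s v) hu).trans (hcap v))

lemma exists_LPFeasible (G : SimpleGraph V) [DecidableRel G.Adj] (hc : ∀ v, 0 < c v)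
    (hd : ∀ v, 0 ≤ d v) : ∃ x f, LPFeasible G c d x f := by
  have hdc (u : V) : 0 ≤ d u / c u := div_nonneg (hd u) (hc u).le
  refine ⟨fun u => 1 + d u / c u, fun u v => if v = u then d u else 0,
    fun u => by linarith [hdc u], ⟨fun u v => ?_, fun u v hv => ?_⟩, fun u => ?_,
    fun u => ?_, fun u v _ => ?_⟩
  · dsimp only; split_ifs <;> simp [hd u]
  · dsimp only; rw [if_neg (ne_of_mem_of_not_mem (self_mem_closedNbhd G u) hv).symm]
  · simp [self_mem_closedNbhd]
  · rw [sum_ite_eq, if_pos (self_mem_closedNbhd G u), mul_add, mul_div_cancel₀ _ (hc u).ne']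
    linarith [hc u]
  · dsimp only; split_ifs with h
    · subst h; nlinarith [hd u, hdc u]
    · exact mul_nonneg (hd v) (by linarith [hdc u])

lemma OPTf_le_mul_of_forall_exists (hw : ∀ v, 0 ≤ w v) (hc : ∀ v, 0 < c v)
    (hd : ∀ v, 0 ≤ d v) {a : ℝ} (ha : 0 < a)
    (h : ∀ x f, LPFeasible G c d x f →
      ∃ x' f', LPFeasible H c d x' f' ∧ ∑ u, w u * x' u ≤ a * ∑ u, w u * x u) :
    OPTf H w c d ≤ a * OPTf G w c d := by
  have hbdd : BddBelow {r | ∃ x f, LPFeasible H c d x f ∧ ∑ u, w u * x u = r} :=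
    ⟨0, by
      rintro _ ⟨x, f, hxf, rfl⟩
      exact sum_nonneg fun u _ => mul_nonneg (hw u) (hxf.x_nonneg u)⟩
  obtain ⟨x, f, hxf⟩ := exists_LPFeasible G hc hd
  rw [← div_le_iff₀' ha]
  refine le_csInf ⟨_, x, f, hxf, rfl⟩ ?_
  rintro _ ⟨x, f, hxf, rfl⟩
  obtain ⟨x', f', hxf', hcost⟩ := h x f hxf
  rw [div_le_iff₀' ha]
  exact (csInf_le hbdd ⟨x', f', hxf', rfl⟩).trans hcost

end LP

section Rerouting

variable (G H : SimpleGraph V) [DecidableRel G.Adj] [DecidableRel H.Adj] (c d : V → ℝ)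
  (T : V → V → V) (f : V → V → ℝ)

structure IsLostServer (u v : V) : Prop where
  demand_pos : 0 < d u
  mem_closedNbhd : v ∈ closedNbhd G u
  notMem_closedNbhd : v ∉ closedNbhd H u

lemma isLostServer_iff {u v : V} :
    IsLostServer G H d u v ↔ 0 < d u ∧ v ∈ closedNbhd G u ∧ v ∉ closedNbhd H u :=
  ⟨fun ⟨h₁, h₂, h₃⟩ => ⟨h₁, h₂, h₃⟩, fun ⟨h₁, h₂, h₃⟩ => ⟨h₁, h₂, h₃⟩⟩

noncomputable instance (u v : V) : Decidable (IsLostServer G H d u v) :=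
  decidable_of_iff' _ (isLostServer_iff G H d)

noncomputable def lostFlow (u v : V) : ℝ :=
  if IsLostServer G H d u v then f u v else 0

/-- Serving the lost flow from `T u v` instead of `v` raises `x (T u v)` by this much: per unit
of `x`, the server `T u v` can take `min (c (T u v)) (d u)` of the demand of `u`. -/
noncomputable def lostRate (u v : V) : ℝ :=
  lostFlow G H d f u v / min (c (T u v)) (d u)

noncomputable def rerouteIncrease (t : V) : ℝ :=
  ∑ u, ∑ v, if T u v = t then lostRate G H c d T f u v else 0

noncomputable def reroutedFlow (u t : V) : ℝ :=
  (if t ∈ closedNbhd H u then f u t else 0) + ∑ v, if T u v = t then lostFlow G H d f u v else 0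

variable {G H c d T f} {w x : V → ℝ}

lemma lostFlow_nonneg (hf : ∀ u v, 0 ≤ f u v) (u v : V) : 0 ≤ lostFlow G H d f u v := by
  unfold lostFlow; split_ifs <;> simp [hf u v]

lemma lostFlow_eq_min_mul_lostRate (hc : ∀ v, 0 < c v) (u v : V) :
    lostFlow G H d f u v = min (c (T u v)) (d u) * lostRate G H c d T f u v := by
  by_cases h : IsLostServer G H d u v
  · rw [lostRate, mul_div_cancel₀ _ (lt_min (hc _) h.demand_pos).ne']
  · simp [lostRate, lostFlow, h]

lemma lostRate_nonneg (hf : ∀ u v, 0 ≤ f u v) (hc : ∀ v, 0 < c v) (u v : V) :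
    0 ≤ lostRate G H c d T f u v := by
  by_cases h : IsLostServer G H d u v
  · exact div_nonneg (lostFlow_nonneg hf u v) (lt_min (hc _) h.demand_pos).le
  · simp [lostRate, lostFlow, h]

lemma rerouteIncrease_nonneg (hf : ∀ u v, 0 ≤ f u v) (hc : ∀ v, 0 < c v) (t : V) :
    0 ≤ rerouteIncrease G H c d T f t :=
  sum_nonneg fun u _ => sum_nonneg fun v _ => by
    split_ifs <;> simp [lostRate_nonneg hf hc u v]

lemma ite_lostFlow_le_mul (hf : ∀ u v, 0 ≤ f u v) (hc : ∀ v, 0 < c v) {a : ℝ} (t u v : V)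
    (ha : min (c t) (d u) ≤ a) :
    (if T u v = t then lostFlow G H d f u v else 0) ≤
      a * if T u v = t then lostRate G H c d T f u v else 0 := by
  split_ifs with h
  · rw [lostFlow_eq_min_mul_lostRate (T := T) hc, h]
    exact mul_le_mul_of_nonneg_right ha (lostRate_nonneg hf hc u v)
  · simp

lemma sum_lostFlow (hsub : ∀ u, closedNbhd H u ⊆ closedNbhd G u) {u : V} (hu : 0 < d u) :
    ∑ v, lostFlow G H d f u v + ∑ v ∈ closedNbhd H u, f u v =
      ∑ v ∈ closedNbhd G u, f u v := by
  rw [← sum_sdiff (hsub u)]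
  congr 1
  simp only [lostFlow]
  rw [← sum_filter]
  congr 1
  ext v
  simp [isLostServer_iff, hu]

lemma lostFlow_eq_zero_of_notMem
    (hT : ∀ u v, IsLostServer G H d u v → T u v ∈ closedNbhd H u) {u v : V}
    (h : T u v ∉ closedNbhd H u) :
    lostFlow G H d f u v = 0 :=
  if_neg fun hl => h (hT u v hl)

lemma reroutedFlow_eq_zero
    (hT : ∀ u v, IsLostServer G H d u v → T u v ∈ closedNbhd H u) {u t : V}
    (ht : t ∉ closedNbhd H u) :
    reroutedFlow G H d T f u t = 0 := by
  rw [reroutedFlow, if_neg ht, zero_add]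
  exact sum_eq_zero fun v _ => by
    split_ifs with h
    · exact lostFlow_eq_zero_of_notMem hT (h ▸ ht)
    · rfl

lemma sum_reroutedFlow
    (hT : ∀ u v, IsLostServer G H d u v → T u v ∈ closedNbhd H u) (u : V) :
    ∑ t ∈ closedNbhd H u, reroutedFlow G H d T f u t =
      ∑ t ∈ closedNbhd H u, f u t + ∑ v, lostFlow G H d f u v := by
  simp only [reroutedFlow, sum_add_distrib]
  congr 1
  · exact sum_congr rfl fun t ht => if_pos ht
  · rw [sum_comm]
    refine sum_congr rfl fun v _ => ?_
    rw [sum_ite_eq]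
    split_ifs with h
    · rfl
    · exact (lostFlow_eq_zero_of_notMem hT h).symm

lemma LPFeasible.demand_le_sum_reroutedFlow (hf : LPFeasible G c d x f)
    (hsub : ∀ u, closedNbhd H u ⊆ closedNbhd G u)
    (hT : ∀ u v, IsLostServer G H d u v → T u v ∈ closedNbhd H u) (u : V) :
    d u ≤ ∑ t ∈ closedNbhd H u, reroutedFlow G H d T f u t := by
  obtain ⟨-, ⟨hf0, -⟩, hdem, -, -⟩ := hf
  rw [sum_reroutedFlow hT, add_comm]
  rcases lt_or_ge 0 (d u) with hu | hu
  · rw [sum_lostFlow hsub hu]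
    exact hdem u
  · exact hu.trans (add_nonneg (sum_nonneg fun v _ => lostFlow_nonneg hf0 u v)
      (sum_nonneg fun t _ => hf0 u t))

lemma LPFeasible.sum_reroutedFlow_le (hf : LPFeasible G c d x f) (hc : ∀ v, 0 < c v)
    (hsub : ∀ u, closedNbhd H u ⊆ closedNbhd G u) (t : V) :
    ∑ v ∈ closedNbhd H t, reroutedFlow G H d T f v t ≤
      c t * (x t + rerouteIncrease G H c d T f t) := by
  obtain ⟨-, ⟨hf0, -⟩, -, hcap, -⟩ := hf
  simp only [reroutedFlow, sum_add_distrib, mul_add]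
  refine add_le_add ?_ ?_
  · calc ∑ v ∈ closedNbhd H t, (if t ∈ closedNbhd H v then f v t else 0)
        ≤ ∑ v ∈ closedNbhd H t, f v t :=
          sum_le_sum fun v _ => by split_ifs <;> simp [hf0 v t]
      _ ≤ ∑ v ∈ closedNbhd G t, f v t :=
          sum_le_sum_of_subset_of_nonneg (hsub t) fun v _ _ => hf0 v t
      _ ≤ c t * x t := hcap t
  · calc ∑ v ∈ closedNbhd H t, ∑ v', (if T v v' = t then lostFlow G H d f v v' else 0)
        ≤ ∑ v, ∑ v', (if T v v' = t then lostFlow G H d f v v' else 0) :=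
          sum_le_sum_of_subset_of_nonneg (subset_univ _) fun v _ _ => sum_nonneg fun v' _ => by
            split_ifs <;> simp [lostFlow_nonneg hf0 v v']
      _ ≤ ∑ v, ∑ v', c t * (if T v v' = t then lostRate G H c d T f v v' else 0) :=
          sum_le_sum fun v _ => sum_le_sum fun v' _ =>
            ite_lostFlow_le_mul hf0 hc t v v' (min_le_left _ _)
      _ = c t * rerouteIncrease G H c d T f t := by simp only [rerouteIncrease, mul_sum]

lemma LPFeasible.reroutedFlow_le (hf : LPFeasible G c d x f) (hc : ∀ v, 0 < c v)
    (hd : ∀ v, 0 ≤ d v) (hsub : ∀ u, closedNbhd H u ⊆ closedNbhd G u) {t v : V}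
    (hv : v ∈ closedNbhd H t) :
    reroutedFlow G H d T f v t ≤ d v * (x t + rerouteIncrease G H c d T f t) := by
  obtain ⟨-, ⟨hf0, -⟩, -, -, hdx⟩ := hf
  rw [reroutedFlow, if_pos (mem_closedNbhd_comm.1 hv), mul_add]
  refine add_le_add (hdx t v (hsub t hv)) ?_
  calc ∑ v', (if T v v' = t then lostFlow G H d f v v' else 0)
      ≤ ∑ v', d v * (if T v v' = t then lostRate G H c d T f v v' else 0) :=
        sum_le_sum fun v' _ => ite_lostFlow_le_mul hf0 hc t v v' (min_le_right _ _)
    _ = d v * ∑ v', (if T v v' = t then lostRate G H c d T f v v' else 0) := (mul_sum ..).symm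
    _ ≤ d v * rerouteIncrease G H c d T f t := by
        refine mul_le_mul_of_nonneg_left ?_ (hd v)
        refine single_le_sum (f := fun u => ∑ v', if T u v' = t then _ else 0)
          (fun u _ => sum_nonneg fun v' _ => ?_) (mem_univ v)
        split_ifs <;> simp [lostRate_nonneg hf0 hc u v']

lemma LPFeasible.reroute (hf : LPFeasible G c d x f) (hc : ∀ v, 0 < c v) (hd : ∀ v, 0 ≤ d v)
    (hsub : ∀ u, closedNbhd H u ⊆ closedNbhd G u)
    (hT : ∀ u v, IsLostServer G H d u v → T u v ∈ closedNbhd H u) :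
    LPFeasible H c d (x + rerouteIncrease G H c d T f) (reroutedFlow G H d T f) := by
  have hf0 := hf.flow_nonneg
  refine ⟨fun t => add_nonneg (hf.x_nonneg t) (rerouteIncrease_nonneg hf0 hc t),
    ⟨fun u t => ?_, fun u t => reroutedFlow_eq_zero hT⟩,
    hf.demand_le_sum_reroutedFlow hsub hT, hf.sum_reroutedFlow_le hc hsub,
    fun t v => hf.reroutedFlow_le hc hd hsub⟩
  exact add_nonneg (by split_ifs <;> simp [hf0 u t])
    (sum_nonneg fun v _ => by split_ifs <;> simp [lostFlow_nonneg hf0 u v])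

lemma sum_mul_rerouteIncrease (w : V → ℝ) :
    ∑ t, w t * rerouteIncrease G H c d T f t =
      ∑ u, ∑ v, w (T u v) * lostRate G H c d T f u v := by
  simp only [rerouteIncrease, mul_sum, mul_ite, mul_zero]
  rw [sum_comm]
  refine sum_congr rfl fun u _ => ?_
  rw [sum_comm]
  simp

lemma LPFeasible.mul_lostRate_le (hf : LPFeasible G c d x f) (hw : ∀ v, 0 ≤ w v)
    (hc : ∀ v, 0 < c v) {u v : V}
    (hcost : IsLostServer G H d u v →
      w (T u v) * min (d u) (c v) ≤ w v * min (c (T u v)) (d u)) :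
    w (T u v) * lostRate G H c d T f u v ≤ if IsLostServer G H d u v then w v * x v else 0 := by
  by_cases h : IsLostServer G H d u v
  · rw [if_pos h, lostRate, lostFlow, if_pos h, ← mul_div_assoc,
      div_le_iff₀ (lt_min (hc _) h.demand_pos)]
    calc w (T u v) * f u v ≤ w (T u v) * (min (d u) (c v) * x v) :=
          mul_le_mul_of_nonneg_left (hf.flow_le_min_mul h.mem_closedNbhd) (hw _)
      _ ≤ w v * min (c (T u v)) (d u) * x v := by
          rw [← mul_assoc]; exact mul_le_mul_of_nonneg_right (hcost h) (hf.x_nonneg v)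
      _ = w v * x v * min (c (T u v)) (d u) := by ring
  · simp [lostRate, lostFlow, h]

theorem OPTf_le_two_mul_of_reroute (hw : ∀ v, 0 ≤ w v) (hc : ∀ v, 0 < c v)
    (hd : ∀ v, 0 ≤ d v) (hsub : ∀ u, closedNbhd H u ⊆ closedNbhd G u)
    (hT : ∀ u v, IsLostServer G H d u v → T u v ∈ closedNbhd H u)
    (hcost : ∀ u v, IsLostServer G H d u v →
      w (T u v) * min (d u) (c v) ≤ w v * min (c (T u v)) (d u))
    (hunique : ∀ u u' v, IsLostServer G H d u v → IsLostServer G H d u' v → u = u') :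
    OPTf H w c d ≤ 2 * OPTf G w c d := by
  refine OPTf_le_mul_of_forall_exists hw hc hd two_pos fun x f hf =>
    ⟨_, _, hf.reroute hc hd hsub hT, ?_⟩
  have hincrease : ∑ t, w t * rerouteIncrease G H c d T f t ≤ ∑ v, w v * x v := by
    calc ∑ t, w t * rerouteIncrease G H c d T f t
        = ∑ u, ∑ v, w (T u v) * lostRate G H c d T f u v := sum_mul_rerouteIncrease w
      _ ≤ ∑ u, ∑ v, if IsLostServer G H d u v then w v * x v else 0 :=
          sum_le_sum fun u _ => sum_le_sum fun v _ => hf.mul_lostRate_le hw hc (hcost u v)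
      _ = ∑ v, ∑ u, if IsLostServer G H d u v then w v * x v else 0 := sum_comm
      _ ≤ ∑ v, w v * x v := sum_le_sum fun v _ =>
          sum_ite_le_of_unique (mul_nonneg (hw v) (hf.x_nonneg v)) fun u u' => hunique u u' v
  simp only [Pi.add_apply, mul_add, sum_add_distrib]
  linarith

end Rerouting

lemma IsLostServer.adj {G H : SimpleGraph V} [DecidableRel G.Adj] [DecidableRel H.Adj]
    {d : V → ℝ} {u v : V} (h : IsLostServer G H d u v) : G.Adj u v :=
  (mem_closedNbhd_iff.1 h.mem_closedNbhd).resolve_left fun hvu =>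
    h.notMem_closedNbhd (hvu ▸ self_mem_closedNbhd H u)

lemma IsLostServer.mem_of_subDemand {G H : SimpleGraph V} [DecidableRel G.Adj]
    [DecidableRel H.Adj] {d : V → ℝ} {R : Finset V} {u v : V}
    (h : IsLostServer G H (subDemand d R) u v) : u ∈ R := by
  by_contra hu
  simpa [subDemand, hu] using h.demand_pos

lemma exists_gt_of_notMem_maxSet [LinearOrder V] {s : Finset V} {x : V} (hx : x ∈ s)
    (hx' : x ∉ maxSet s) : ∃ y ∈ s, x < y := by
  simpa [maxSet, hx] using hx'

namespace ReductionData

variable [LinearOrder V] {G : SimpleGraph V} [DecidableRel G.Adj] {w c d : V → ℝ}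
  {R : Finset V} (data : ReductionData G w c d R)

/-- `k_u`, or the junk value `u` when `k_u` is undefined. -/
def kVert (u : V) : V := (data.l u).getD (data.kIdx u) u

/-- `j_u`, or the junk value `u` when `j_u` is undefined. -/
def jVert (u : V) : V := (data.l u).getD (data.jIdx u) u

def target (u v : V) : V :=
  if (data.l u).idxOf v < data.jIdx u then data.kVert u else data.jVert u

lemma target_mem_keepSet (L : V → ℕ) (u v : V) : data.target u v ∈ keepSet G L data u := by
  unfold target; split_ifs <;> simp [keepSet, kVert, jVert]

variable {data} {u v : V}

lemma kVert_spec (hu : u ∈ R) (hv : v ∈ closedNbhd G u)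
    (hlt : (data.l u).idxOf v < data.jIdx u) :
    data.kVert u ∈ closedNbhd G u ∧ c (data.kVert u) ≤ d u ∧
      w (data.kVert u) / c (data.kVert u) ≤ w v / c v := by
  have hm : (data.l u).idxOf v < (data.l u).length :=
    List.idxOf_lt_length_iff.2 ((data.mem_iff u hu v).2 hv)
  have hk : data.kIdx u < data.jIdx u := data.kIdx_lt_j u hu (by omega)
  have hklen : data.kIdx u < (data.l u).length := hk.trans_le (data.jIdx_le u hu)
  have hkv : data.kVert u = (data.l u).get ⟨_, hklen⟩ := by
    simp [kVert, List.getD_eq_getElem?_getD, hklen]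
  refine ⟨?_, ?_, ?_⟩
  · rw [hkv, ← data.mem_iff u hu]
    exact List.get_mem _ _
  · rw [hkv]
    exact data.c_le_before_j u hu _ hklen hk
  · have hratio := data.k_ratio_min u hu _ hm hlt hklen
    rwa [List.idxOf_get, ← hkv] at hratio

lemma jVert_spec (hu : u ∈ R) (hv : v ∈ closedNbhd G u)
    (hle : data.jIdx u ≤ (data.l u).idxOf v) :
    data.jVert u ∈ closedNbhd G u ∧ d u < c (data.jVert u) ∧ w (data.jVert u) ≤ w v := by
  have hm : (data.l u).idxOf v < (data.l u).length :=
    List.idxOf_lt_length_iff.2 ((data.mem_iff u hu v).2 hv)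
  have hjlen : data.jIdx u < (data.l u).length := hle.trans_lt hm
  have hjv : data.jVert u = (data.l u).get ⟨_, hjlen⟩ := by
    simp [jVert, List.getD_eq_getElem?_getD, hjlen]
  refine ⟨?_, ?_, ?_⟩
  · rw [hjv, ← data.mem_iff u hu]
    exact List.get_mem _ _
  · rw [hjv]
    exact data.c_gt_at_j u hu hjlen
  · rw [hjv]
    conv_rhs => rw [← List.idxOf_get hm]
    rcases hle.eq_or_lt with heq | hlt
    · simp [heq]
    · exact (data.sorted u hu).rel_get_of_lt (Fin.mk_lt_mk.2 hlt)

lemma target_mem_closedNbhd (hu : u ∈ R) (hv : v ∈ closedNbhd G u) :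
    data.target u v ∈ closedNbhd G u := by
  unfold target
  split_ifs with h
  · exact (kVert_spec hu hv h).1
  · exact (jVert_spec hu hv (not_lt.1 h)).1

/-- The redirected server is at most as expensive as `v`, measured per unit of demand of `u`
that it can take: by the ratio choice of `k_u`, or by the cost order and `c (j_u) > d u`. -/
lemma target_cost_le (hw : ∀ v, 0 ≤ w v) (hc : ∀ v, 0 < c v) (hd : ∀ v, 0 ≤ d v)
    (hu : u ∈ R) (hv : v ∈ closedNbhd G u) :
    w (data.target u v) * min (d u) (c v) ≤ w v * min (c (data.target u v)) (d u) := by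
  unfold target
  split_ifs with h
  · obtain ⟨-, hck, hratio⟩ := kVert_spec hu hv h
    rw [div_le_div_iff₀ (hc _) (hc _)] at hratio
    rw [min_eq_left hck]
    exact (mul_le_mul_of_nonneg_left (min_le_right _ _) (hw _)).trans hratio
  · obtain ⟨-, hdc, hwj⟩ := jVert_spec hu hv (not_lt.1 h)
    rw [min_eq_right hdc.le]
    exact (mul_le_mul_of_nonneg_left (min_le_left _ _) (hw _)).trans
      (mul_le_mul_of_nonneg_right hwj (hd u))

end ReductionData

namespace IsGeneralLadder

variable {α : Type*} [LinearOrder α] {G : SimpleGraph α} {L : α → ℕ} {u u' v y : α}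

lemma layer_eq_of_adj [Fintype α] (hGL : IsGeneralLadder G L) {i : ℕ}
    (hu : u ∈ layerClass L i) (hv : v ∈ layerClass L i) (h : G.Adj u v) : L u = L v := by
  have := hGL.adj_layers u v h
  simp only [layerClass, mem_filter, mem_univ, true_and] at hu hv
  omega

lemma le_of_adj_of_lt (hGL : IsGeneralLadder G L) (hL : L u = L u') (hv : G.Adj u' v)
    (hy : G.Adj u y) (hyv : L y = L v) (hvy : v < y) (hlayer : L v + 1 = L u ∨ L v = L u + 1) :
    u' ≤ u := by
  rcases hlayer with hdown | hup
  · exact hGL.mono v y hyv.symm hvy u' u hv.symm hy.symm (by omega) (by omega)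
  · by_contra! h
    exact (hGL.mono u u' hL h y v hy hv (by omega) (by omega)).not_gt hvy

end IsGeneralLadder

section Ladder

variable [LinearOrder V] {G : SimpleGraph V} [DecidableRel G.Adj] {L : V → ℕ} {u u' v : V}

lemma mem_keepSet_of_layer_eq {w c d : V → ℝ} {R : Finset V} (data : ReductionData G w c d R)
    (hv : v ∈ closedNbhd G u) (hL : L v = L u) : v ∈ keepSet G L data u := by
  simp [keepSet, hv, hL]

lemma exists_gt_of_notMem_keepSet {w c d : V → ℝ} {R : Finset V}
    {data : ReductionData G w c d R} (hv : v ∈ closedNbhd G u)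
    (hL : L v + 1 = L u ∨ L v = L u + 1) (hk : v ∉ keepSet G L data u) :
    ∃ y ∈ closedNbhd G u, L y = L v ∧ v < y := by
  rcases hL with hL | hL
  · obtain ⟨y, hy, hvy⟩ := exists_gt_of_notMem_maxSet (x := v) (s := (closedNbhd G u).filter
      fun x => L x + 1 = L u) (by simp [hv, hL]) fun h => hk (by simp [keepSet, h])
    exact ⟨y, (mem_filter.1 hy).1, by have := (mem_filter.1 hy).2; omega, hvy⟩
  · obtain ⟨y, hy, hvy⟩ := exists_gt_of_notMem_maxSet (x := v) (s := (closedNbhd G u).filter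
      fun x => L x = L u + 1) (by simp [hv, hL]) fun h => hk (by simp [keepSet, h])
    exact ⟨y, (mem_filter.1 hy).1, by have := (mem_filter.1 hy).2; omega, hvy⟩

lemma closedNbhd_reducedGraph_subset {w c d : V → ℝ} {R : Finset V}
    (data : ReductionData G w c d R) (u : V) :
    closedNbhd (reducedGraph G L data) u ⊆ closedNbhd G u := by
  intro t ht
  rcases mem_closedNbhd_iff.1 ht with h | h
  · exact mem_closedNbhd_iff.2 (Or.inl h)
  · exact mem_closedNbhd_iff.2 (Or.inr h.1)

variable {w c d : V → ℝ} {i : ℕ}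
  {data : ReductionData (subGraph G (layerClass L i)) w c d (layerClass L i)} {t : V}

lemma mem_closedNbhd_reducedGraph (hGL : IsGeneralLadder G L) (hu : u ∈ layerClass L i)
    (ht : t ∈ closedNbhd (subGraph G (layerClass L i)) u) (hk : t ∈ keepSet _ L data u) :
    t ∈ closedNbhd (reducedGraph _ L data) u := by
  rcases mem_closedNbhd_iff.1 ht with rfl | hadj
  · exact self_mem_closedNbhd _ _
  · refine mem_closedNbhd_iff.2 (Or.inr ⟨hadj, fun _ => hk, fun htR => ?_⟩)
    exact mem_keepSet_of_layer_eq data (mem_closedNbhd_comm.1 ht)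
      (hGL.layer_eq_of_adj hu htR hadj.1)

namespace IsLostServer

lemma notMem_keepSet (hGL : IsGeneralLadder G L)
    (h : IsLostServer (subGraph G (layerClass L i)) (reducedGraph _ L data)
      (subDemand d (layerClass L i)) u v) :
    v ∉ keepSet _ L data u := fun hk =>
  h.notMem_closedNbhd (mem_closedNbhd_reducedGraph hGL h.mem_of_subDemand h.mem_closedNbhd hk)

lemma layer_adjacent (hGL : IsGeneralLadder G L)
    (h : IsLostServer (subGraph G (layerClass L i)) (reducedGraph _ L data)
      (subDemand d (layerClass L i)) u v) :
    L v + 1 = L u ∨ L v = L u + 1 := by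
  have hne : L v ≠ L u := fun hL =>
    h.notMem_keepSet hGL (mem_keepSet_of_layer_eq data h.mem_closedNbhd hL)
  have := hGL.adj_layers u v h.adj.1
  omega

lemma target_mem (hGL : IsGeneralLadder G L)
    (h : IsLostServer (subGraph G (layerClass L i)) (reducedGraph _ L data)
      (subDemand d (layerClass L i)) u v) :
    data.target u v ∈ closedNbhd (reducedGraph _ L data) u :=
  mem_closedNbhd_reducedGraph hGL h.mem_of_subDemand
    (data.target_mem_closedNbhd h.mem_of_subDemand h.mem_closedNbhd)
    (data.target_mem_keepSet L u v)

/-- Two clients losing `v` lie in one layer, as the layers of `R_i` are three apart; since `v` is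
not the largest neighbor of `u` in its layer, monotonicity of the ladder puts `u'` below `u`. -/
lemma le_of_isLostServer (hGL : IsGeneralLadder G L)
    (h : IsLostServer (subGraph G (layerClass L i)) (reducedGraph _ L data)
      (subDemand d (layerClass L i)) u v)
    (h' : IsLostServer (subGraph G (layerClass L i)) (reducedGraph _ L data)
      (subDemand d (layerClass L i)) u' v) : u' ≤ u := by
  obtain ⟨y, hy, hyv, hvy⟩ :=
    exists_gt_of_notMem_keepSet h.mem_closedNbhd (h.layer_adjacent hGL) (h.notMem_keepSet hGL)
  have hyu : G.Adj u y := by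
    refine ((mem_closedNbhd_iff.1 hy).resolve_left fun hyu' => ?_).1
    have := h.layer_adjacent hGL
    rw [hyu'] at hyv
    omega
  have hL : L u = L u' := by
    have hu := h.mem_of_subDemand
    have hu' := h'.mem_of_subDemand
    have := h.layer_adjacent hGL
    have := h'.layer_adjacent hGL
    simp only [layerClass, mem_filter, mem_univ, true_and] at hu hu'
    omega
  exact hGL.le_of_adj_of_lt hL h'.adj.1 hyu hyv hvy (h.layer_adjacent hGL)

end IsLostServer

end Ladder

theorem reduction_LP_bound_general [LinearOrder V]
    (G : SimpleGraph V) [DecidableRel G.Adj] (L : V → ℕ)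
    (hGL : IsGeneralLadder G L)
    (w c d : V → ℝ) (hw : ∀ v, 0 ≤ w v) (hc : ∀ v, 0 < c v) (hd : ∀ v, 0 ≤ d v)
    (i : ℕ)
    (data : ReductionData (subGraph G (layerClass L i)) w c d (layerClass L i)) :
    OPTf (reducedGraph (subGraph G (layerClass L i)) L data) w c
        (subDemand d (layerClass L i)) ≤
      2 * OPTf (subGraph G (layerClass L i)) w c (subDemand d (layerClass L i)) := by
  have hd' (v : V) : 0 ≤ subDemand d (layerClass L i) v := by
    unfold subDemand; split_ifs <;> simp [hd v]
  refine OPTf_le_two_mul_of_reroute (T := data.target) hw hc hd'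
    (closedNbhd_reducedGraph_subset data) (fun u v h => h.target_mem hGL) (fun u v h => ?_)
    fun u u' v h h' => le_antisymm (h'.le_of_isLostServer hGL h) (h.le_of_isLostServer hGL h')
  have hu := h.mem_of_subDemand
  rw [subDemand, if_pos hu]
  exact data.target_cost_le hw hc hd hu h.mem_closedNbhd

/-- the reduction at most doubles the optimal LP value:
`OPT_f(H_i) ≤ 2·OPT_f(G_i)`. -/
theorem reduction_LP_bound [LinearOrder V]
    (G : SimpleGraph V) [DecidableRel G.Adj] (L : V → ℕ)
    (hGL : IsGeneralLadder G L)
    (w c d : V → ℝ) (hw : ∀ v, 0 ≤ w v) (hc : ∀ v, 0 < c v) (hd : ∀ v, 0 ≤ d v)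
    (i : ℕ) (hi : i < 3)
    (data : ReductionData (subGraph G (layerClass L i)) w c d (layerClass L i)) :
    OPTf (reducedGraph (subGraph G (layerClass L i)) L data) w c
        (subDemand d (layerClass L i)) ≤
      2 * OPTf (subGraph G (layerClass L i)) w c (subDemand d (layerClass L i)) :=
  reduction_LP_bound_general G L hGL w c d hw hc hd i data
end
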